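/- The Cayley cubic p(x, y, z) = 1 + 2xyz − x² − y² − z² ∈ ℝ[x, y, z] is a real-zero polynomial with respect to e = (0, 0, 0), the point a = (1, 0, 0) lies on the boundary of the rigidly convex set S_e(p) and is a smooth point of p, yet p is not strictly quasi-concave at a. -/

import Mathlib

/-!
The Cayley cubic is determinantal: `p(x) = det (1 + A(x))`, where `A(x)` is the real symmetric
matrix with zero diagonal and off-diagonal entries `x₀, x₁, x₂`. Hence `p(t v) = det (1 + t A(v))`,
and if `(1 + t A(v)) w = 0` with `w ≠ 0` then `t ⟨w, A(v) w⟩ = -‖w‖²` with `⟨w, A(v) w⟩` real,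
so every root `t` is real. The point `a = (1,0,0)` is a zero of `p` and `p(t a) = 1 - t²` does not
vanish for `0 ≤ t < 1`, so `a` lies in `S_0(p)` while `c a ∉ S_0(p)` for `c > 1`; thus `a` is a
boundary point. Finally `p(1, s, s) = 0` for all `s`, so the Hessian vanishes along the tangent
direction `(0, 1, 1)`.
-/

open MvPolynomial

/-- The univariate polynomial `t ↦ h(a + t·v)` obtained by restricting a multivariate
polynomial `h` to the line through `a` with direction `v`. -/
noncomputable def linePoly {n : ℕ} (h : MvPolynomial (Fin n) ℝ) (a v : Fin n → ℝ) :
    Polynomial ℝ :=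
  MvPolynomial.aeval (fun i => Polynomial.C (a i) + Polynomial.C (v i) * Polynomial.X) h

/-- A real univariate polynomial has only real roots. -/
def RealRooted (q : Polynomial ℝ) : Prop :=
  ∀ z : ℂ, Polynomial.aeval z q = 0 → z.im = 0

/-- A real univariate polynomial has only non-negative real roots. -/
def NonnegRealRooted (q : Polynomial ℝ) : Prop :=
  ∀ z : ℂ, Polynomial.aeval z q = 0 → z.im = 0 ∧ 0 ≤ z.re

/-- `h` is hyperbolic in direction `e`: `h(e) ≠ 0` and for all `a` the univariate
polynomial `t ↦ h(a - t·e)` has only real roots. -/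
def IsHyperbolic {n : ℕ} (h : MvPolynomial (Fin n) ℝ) (e : Fin n → ℝ) : Prop :=
  MvPolynomial.eval e h ≠ 0 ∧ ∀ a : Fin n → ℝ, RealRooted (linePoly h a (-e))

/-- The hyperbolicity cone `Λ_e(h)`. -/
def hypCone {n : ℕ} (h : MvPolynomial (Fin n) ℝ) (e : Fin n → ℝ) : Set (Fin n → ℝ) :=
  {a | NonnegRealRooted (linePoly h a (-e))}

/-- multiplicity (order of vanishing) of `h` at `a`: the smallest `m` such that the
degree-`m` homogeneous component of `h(x + a)` is non-zero. -/
noncomputable def multAt {n : ℕ} (h : MvPolynomial (Fin n) ℝ) (a : Fin n → ℝ) : ℕ :=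
  sInf {m | MvPolynomial.homogeneousComponent m
    (MvPolynomial.aeval (fun i => MvPolynomial.X i + MvPolynomial.C (a i)) h) ≠ 0}

/-- `p` is a real-zero polynomial with respect to `e`. -/
def IsRealZero {n : ℕ} (p : MvPolynomial (Fin n) ℝ) (e : Fin n → ℝ) : Prop :=
  MvPolynomial.eval e p ≠ 0 ∧ ∀ v : Fin n → ℝ, RealRooted (linePoly p e v)

/-- The rigidly convex set `S_e(p)` of a real-zero polynomial. -/
def rigidSet {n : ℕ} (p : MvPolynomial (Fin n) ℝ) (e : Fin n → ℝ) : Set (Fin n → ℝ) :=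
  {a | ∀ t : ℝ, 0 ≤ t → t < 1 → ¬ (linePoly p e (a - e)).IsRoot t}

/-- A polynomial is strictly quasi-concave at `a` if its Hessian at `a` is negative
definite on the orthogonal complement of its gradient at `a`. -/
def StrictQuasiConcaveAt {n : ℕ} (g : MvPolynomial (Fin n) ℝ) (a : Fin n → ℝ) : Prop :=
  ∀ v : Fin n → ℝ, v ≠ 0 →
    (∑ i, v i * MvPolynomial.eval a (MvPolynomial.pderiv i g)) = 0 →
    (∑ i, ∑ j, v i * v j *
      MvPolynomial.eval a (MvPolynomial.pderiv i (MvPolynomial.pderiv j g))) < 0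

/-- A spectrahedral shadow (cone version): a linear image of
`{a : a₁M₁ + ⋯ + aₘMₘ ⪰ 0}` for real symmetric matrices `Mᵢ`. -/
def IsSpectrahedralShadowCone {n : ℕ} (S : Set (Fin n → ℝ)) : Prop :=
  ∃ (m d : ℕ) (M : Fin m → Matrix (Fin d) (Fin d) ℝ)
    (L : (Fin m → ℝ) →ₗ[ℝ] (Fin n → ℝ)),
      (∀ i, (M i).IsSymm) ∧ S = L '' {a | (∑ i, a i • M i).PosSemidef}

/-- A spectrahedral shadow: a linear image of
`{b : M₀ + b₁M₁ + ⋯ + bₘMₘ ⪰ 0}` for real symmetric matrices `Mᵢ`. -/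
def IsSpectrahedralShadow {n : ℕ} (S : Set (Fin n → ℝ)) : Prop :=
  ∃ (m d : ℕ) (M₀ : Matrix (Fin d) (Fin d) ℝ) (M : Fin m → Matrix (Fin d) (Fin d) ℝ)
    (L : (Fin m → ℝ) →ₗ[ℝ] (Fin n → ℝ)),
      M₀.IsSymm ∧ (∀ i, (M i).IsSymm) ∧
      S = L '' {b | (M₀ + ∑ i, b i • M i).PosSemidef}

/-- A convex set is pointed if it contains no affine line. -/
def PointedSet {n : ℕ} (S : Set (Fin n → ℝ)) : Prop :=
  ¬ ∃ (a v : Fin n → ℝ), v ≠ 0 ∧ ∀ t : ℝ, a + t • v ∈ S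

/-- Directional derivative `∂_e h = Σᵢ eᵢ ∂h/∂xᵢ`. -/
noncomputable def dirDeriv {n : ℕ} (e : Fin n → ℝ) (h : MvPolynomial (Fin n) ℝ) :
    MvPolynomial (Fin n) ℝ :=
  ∑ i, e i • MvPolynomial.pderiv i h

/-- The Cayley cubic `p(x,y,z) = 1 + 2xyz − x² − y² − z²`. -/
noncomputable def cayleyCubic : MvPolynomial (Fin 3) ℝ :=
  1 + MvPolynomial.C 2 * (MvPolynomial.X 0 * MvPolynomial.X 1 * MvPolynomial.X 2)
    - MvPolynomial.X 0 ^ 2 - MvPolynomial.X 1 ^ 2 - MvPolynomial.X 2 ^ 2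

open Matrix
open scoped ComplexOrder Topology

theorem Matrix.IsHermitian.im_eq_zero_of_det_one_add_smul_eq_zero {𝕜 ι : Type*} [RCLike 𝕜]
    [Fintype ι] [DecidableEq ι] {A : Matrix ι ι 𝕜} (hA : A.IsHermitian) {z : 𝕜}
    (hz : (1 + z • A).det = 0) : RCLike.im z = 0 := by
  obtain ⟨w, hw, hker⟩ := exists_mulVec_eq_zero_iff.mpr hz
  set r := star w ⬝ᵥ A *ᵥ w
  have hq : 0 < star w ⬝ᵥ w := dotProduct_star_self_pos_iff.mpr hw
  have hzr : z * r = -(star w ⬝ᵥ w) := by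
    have := congrArg (star w ⬝ᵥ ·) hker
    simp only [add_mulVec, one_mulVec, smul_mulVec, dotProduct_add,
      dotProduct_smul, smul_eq_mul, dotProduct_zero] at this
    linear_combination this
  have hr : RCLike.im r = 0 := hA.im_star_dotProduct_mulVec_self w
  have hr' : RCLike.re r ≠ 0 := by
    intro h
    have : r = 0 := RCLike.ext (by simpa using h) (by simpa using hr)
    simp only [this, mul_zero, zero_eq_neg, dotProduct_star_self_eq_zero] at hzr
    exact hw hzr
  have := congrArg RCLike.im hzr
  rw [RCLike.mul_im, hr, mul_zero, zero_add, map_neg, (RCLike.pos_iff.mp hq).2, neg_zero] at this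
  exact (mul_eq_zero.mp this).resolve_right hr'

theorem aeval_linePoly {n : ℕ} {S : Type*} [CommRing S] [Algebra ℝ S]
    (h : MvPolynomial (Fin n) ℝ) (a v : Fin n → ℝ) (z : S) :
    Polynomial.aeval z (linePoly h a v) =
      MvPolynomial.aeval (fun i => algebraMap ℝ S (a i) + algebraMap ℝ S (v i) * z) h := by
  rw [linePoly, ← AlgHom.comp_apply, MvPolynomial.comp_aeval]
  simp

theorem eval_linePoly {n : ℕ} (h : MvPolynomial (Fin n) ℝ) (a v : Fin n → ℝ) (t : ℝ) :
    (linePoly h a v).eval t = MvPolynomial.eval (a + t • v) h := by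
  rw [← Polynomial.coe_aeval_eq_eval, aeval_linePoly, MvPolynomial.aeval_eq_eval]
  congr; funext i; simp [mul_comm]

theorem mem_rigidSet_iff {n : ℕ} {p : MvPolynomial (Fin n) ℝ} {e a : Fin n → ℝ} :
    a ∈ rigidSet p e ↔ ∀ t : ℝ, 0 ≤ t → t < 1 → MvPolynomial.eval (e + t • (a - e)) p ≠ 0 := by
  simp [rigidSet, Polynomial.IsRoot, eval_linePoly]

theorem add_smul_sub_notMem_rigidSet {n : ℕ} {p : MvPolynomial (Fin n) ℝ} {e a : Fin n → ℝ}
    (ha : MvPolynomial.eval a p = 0) {c : ℝ} (hc : 1 < c) :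
    e + c • (a - e) ∉ rigidSet p e := by
  have hc0 : c ≠ 0 := by positivity
  rw [mem_rigidSet_iff]
  intro h
  refine h c⁻¹ (by positivity) (inv_lt_one_of_one_lt₀ hc) ?_
  rwa [add_sub_cancel_left, smul_smul, inv_mul_cancel₀ hc0, one_smul, add_sub_cancel]

theorem mem_frontier_of_add_smul_sub_notMem {E : Type*} [AddCommGroup E] [Module ℝ E]
    [TopologicalSpace E] [IsTopologicalAddGroup E] [ContinuousSMul ℝ E] {S : Set E} {e a : E}
    (ha : a ∈ S) (hout : ∀ c : ℝ, 1 < c → e + c • (a - e) ∉ S) : a ∈ frontier S := by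
  refine ⟨subset_closure ha, fun hint => ?_⟩
  have hlim : Filter.Tendsto (fun c : ℝ => e + c • (a - e)) (𝓝[>] 1) (𝓝 a) := by
    have : Continuous fun c : ℝ => e + c • (a - e) := by fun_prop
    simpa using (this.tendsto 1).mono_left nhdsWithin_le_nhds
  obtain ⟨c, hcS, hc⟩ :=
    ((hlim.eventually (mem_interior_iff_mem_nhds.mp hint)).and self_mem_nhdsWithin).exists
  exact hout c hc hcS

theorem mem_frontier_rigidSet {n : ℕ} {p : MvPolynomial (Fin n) ℝ} {e a : Fin n → ℝ}
    (ha : a ∈ rigidSet p e) (h0 : MvPolynomial.eval a p = 0) : a ∈ frontier (rigidSet p e) :=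
  mem_frontier_of_add_smul_sub_notMem ha fun _ hc => add_smul_sub_notMem_rigidSet h0 hc

def cayleyPencil {R : Type*} [Zero R] (x : Fin 3 → R) : Matrix (Fin 3) (Fin 3) R :=
  !![0, x 2, x 1; x 2, 0, x 0; x 1, x 0, 0]

theorem cayleyPencil_smul {R : Type*} [CommRing R] (c : R) (x : Fin 3 → R) :
    cayleyPencil (c • x) = c • cayleyPencil x := by
  ext i j; fin_cases i <;> fin_cases j <;> simp [cayleyPencil]

theorem isHermitian_cayleyPencil {𝕜 : Type*} [RCLike 𝕜] (v : Fin 3 → ℝ) :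
    (cayleyPencil fun i => (v i : 𝕜)).IsHermitian := by
  ext i j; fin_cases i <;> fin_cases j <;> simp [cayleyPencil]

theorem aeval_cayleyCubic {S : Type*} [CommRing S] [Algebra ℝ S] (x : Fin 3 → S) :
    MvPolynomial.aeval x cayleyCubic = (1 + cayleyPencil x).det := by
  simp only [cayleyCubic, cayleyPencil, det_fin_three, map_sub, map_add, map_one, map_mul,
    map_pow, map_ofNat, MvPolynomial.aeval_X, Matrix.add_apply, of_apply, cons_val', cons_val,
    cons_val_zero, cons_val_one, cons_val_fin_one, one_apply_eq, ne_eq, Fin.reduceEq,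
    not_false_eq_true, one_apply_ne, add_zero, zero_add]
  ring

theorem eval_cayleyCubic (x : Fin 3 → ℝ) :
    MvPolynomial.eval x cayleyCubic = 1 + 2 * x 0 * x 1 * x 2 - x 0 ^ 2 - x 1 ^ 2 - x 2 ^ 2 := by
  simp only [cayleyCubic, map_sub, map_add, map_one, map_mul, map_pow, eval_C, eval_X]
  ring

theorem eval_cayleyCubic_one_zero_zero : MvPolynomial.eval ![1, 0, 0] cayleyCubic = 0 := by
  simp [eval_cayleyCubic]

theorem isRealZero_cayleyCubic : IsRealZero cayleyCubic 0 := by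
  refine ⟨by rw [eval_cayleyCubic]; norm_num, fun v z hz => ?_⟩
  have hdet : (1 + z • cayleyPencil fun i => (v i : ℂ)).det = 0 := by
    rw [aeval_linePoly, aeval_cayleyCubic] at hz
    convert hz using 3
    rw [← cayleyPencil_smul]
    congr; funext i; simp [mul_comm]
  exact (isHermitian_cayleyPencil v).im_eq_zero_of_det_one_add_smul_eq_zero hdet

theorem mem_frontier_rigidSet_cayleyCubic : ![1, 0, 0] ∈ frontier (rigidSet cayleyCubic 0) := by
  refine mem_frontier_rigidSet (mem_rigidSet_iff.mpr fun t ht0 ht1 => ?_)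
    eval_cayleyCubic_one_zero_zero
  simp only [eval_cayleyCubic, sub_zero, smul_cons, smul_eq_mul, mul_one, mul_zero, smul_empty,
    zero_add, cons_val_zero, cons_val_one, cons_val]
  nlinarith

theorem gradient_cayleyCubic_ne_zero :
    (fun i => MvPolynomial.eval ![1, 0, 0] (MvPolynomial.pderiv i cayleyCubic)) ≠ 0 := by
  intro h
  have := congrFun h 0
  simp [cayleyCubic, pderiv_X] at this

theorem not_strictQuasiConcaveAt_cayleyCubic : ¬ StrictQuasiConcaveAt cayleyCubic ![1, 0, 0] := by
  intro h
  have := h ![0, 1, 1] (by simp [funext_iff, Fin.forall_fin_succ])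
    (by simp [Fin.sum_univ_three, cayleyCubic, pderiv_X, Pi.single_apply])
  simp [Fin.sum_univ_three, cayleyCubic, pderiv_X, Pi.single_apply] at this

/-- **the Samosa.** The Cayley cubic is real-zero with respect to
`e = (0,0,0)`, the point `a = (1,0,0)` is a boundary point of its rigidly convex set and a
smooth point of `p` (`p(a) = 0`, `∇p(a) ≠ 0`), yet `p` is not strictly quasi-concave
at `a`. -/
theorem cayleyCubic_smooth_boundary_point_not_strictQuasiConcave :
    IsRealZero cayleyCubic 0 ∧
    ![1, 0, 0] ∈ frontier (rigidSet cayleyCubic 0) ∧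
    MvPolynomial.eval ![1, 0, 0] cayleyCubic = 0 ∧
    (fun i => MvPolynomial.eval ![1, 0, 0] (MvPolynomial.pderiv i cayleyCubic)) ≠ 0 ∧
    ¬ StrictQuasiConcaveAt cayleyCubic ![1, 0, 0] :=
  ⟨isRealZero_cayleyCubic, mem_frontier_rigidSet_cayleyCubic, eval_cayleyCubic_one_zero_zero,
    gradient_cayleyCubic_ne_zero, not_strictQuasiConcaveAt_cayleyCubic⟩
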